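/- Let A be a commutative k-algebra and P a Rota-Baxter operator of weight λ on A. Define P̃ : A^ℕ → A^ℕ by P̃(f)(0) = P(f(0)) and P̃(f)(n) = f(n-1) for n ≥ 1. Then P̃ is a Rota-Baxter operator of weight λ on the λ-Hurwitz series algebra A^ℕ, and moreover ε_A ∘ P̃ = P ∘ ε_A and ∂_A ∘ P̃ = id on A^ℕ. -/
import Mathlib


open Finset

/-- The `λ`-Hurwitz product over a `k`-module `M` with respect to a
multiplication `mul`. -/
def hmulG {k M : Type*} [CommRing k] [AddCommMonoid M] [Module k M]
    (lam : k) (mul : M → M → M) (f g : ℕ → M) : ℕ → M :=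
  fun n => ∑ i ∈ range (n + 1), ∑ j ∈ range (n - i + 1),
    (n.choose i * (n - i).choose j) • (lam ^ i • mul (f (n - j)) (g (i + j)))

/-- The `λ`-Hurwitz product on `A^ℕ` for a commutative `k`-algebra `A`. -/
def hmul {k A : Type*} [CommRing k] [CommRing A] [Algebra k A] (lam : k)
    (f g : ℕ → A) : ℕ → A :=
  hmulG lam (· * ·) f g

/-- The identity of the `λ`-Hurwitz series algebra. -/
def hone {A : Type*} [CommRing A] : ℕ → A := fun n => if n = 0 then 1 else 0

/-- The shift operator `∂_A`. -/
def hshift {A : Type*} (f : ℕ → A) : ℕ → A := fun n => f (n + 1)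

/-- The comultiplication-type map `δ_A`. -/
def hdel {M : Type*} (f : ℕ → M) : ℕ → ℕ → M := fun m n => f (m + n)

/-- The extension `P̃` of an operator `P` on `A` to `A^ℕ`:
`P̃(f)(0) = P (f 0)` and `P̃(f)(n) = f (n-1)` for `n ≥ 1`. -/
def hrbext {A : Type*} (P : A → A) (f : ℕ → A) : ℕ → A :=
  fun n => match n with
  | 0 => P (f 0)
  | n + 1 => f n

section Aux

variable {k A : Type*} [CommRing k] [CommRing A] [Algebra k A] (lam : k)

lemma seq_ext {B : Type*} {f g : ℕ → B} (h0 : f 0 = g 0)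
    (hs : hshift f = hshift g) : f = g := by
  funext n
  match n with
  | 0 => exact h0
  | n + 1 => exact congrFun hs n

lemma sum_drop_last {M : Type*} [AddCommMonoid M] (F : ℕ → M) (m : ℕ)
    (h : F m = 0) : ∑ x ∈ range (m + 1), F x = ∑ x ∈ range m, F x := by
  rw [Finset.sum_range_succ, h, add_zero]

lemma sum_shift_head {M : Type*} [AddCommMonoid M] (F : ℕ → M) (m : ℕ)
    (h : F 0 = 0) : ∑ x ∈ range (m + 1), F x = ∑ x ∈ range m, F (x + 1) := by
  rw [Finset.sum_range_succ' F m, h, add_zero]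

lemma hmul_zero (f g : ℕ → A) : hmul lam f g 0 = f 0 * g 0 := by
  simp [hmul, hmulG]

lemma hmul_comm (f g : ℕ → A) : hmul lam f g = hmul lam g f := by
  funext n
  unfold hmul hmulG
  refine Finset.sum_congr rfl fun i hi => ?_
  rw [mem_range, Nat.lt_succ_iff] at hi
  rw [← Finset.sum_range_reflect (fun j =>
    (n.choose i * (n - i).choose j) • (lam ^ i • (g (n - j) * f (i + j)))) (n - i + 1)]
  refine Finset.sum_congr rfl fun j hj => ?_
  rw [mem_range, Nat.lt_succ_iff] at hj
  have h1 : n - i + 1 - 1 - j = n - i - j := by omega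
  have h3 : n - (n - i - j) = i + j := by omega
  have h4 : i + (n - i - j) = n - j := by omega
  rw [h1, h3, h4, mul_comm (g (i + j)) (f (n - j))]
  rw [Nat.choose_symm (show j ≤ n - i by omega)]

lemma pascal2 (n i j : ℕ) :
    (n + 1).choose i * ((n + 1 - i).choose j)
      = n.choose i * ((n - i).choose j)
        + (if 1 ≤ j then n.choose i * ((n - i).choose (j - 1)) else 0)
        + (if 1 ≤ i then n.choose (i - 1) * ((n + 1 - i).choose j) else 0) := by
  match i, j with
  | 0, 0 => simp
  | 0, j + 1 =>
    simp only [if_pos (by omega : 1 ≤ j + 1), if_neg (by omega : ¬ 1 ≤ 0)]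
    simp only [Nat.sub_zero, Nat.choose_zero_right, one_mul, add_zero]
    rw [Nat.choose_succ_succ n j]
    simp only [Nat.succ_eq_add_one, Nat.add_sub_cancel]
    omega
  | i + 1, 0 =>
    simp only [if_pos (by omega : 1 ≤ i + 1), if_neg (by omega : ¬ 1 ≤ 0)]
    have e2 : i + 1 - 1 = i := rfl
    have e3 : n + 1 - (i + 1) = n - i := by omega
    rw [e2, e3, Nat.choose_succ_succ n i]
    simp
    ring
  | i + 1, j + 1 =>
    rw [if_pos (by omega : 1 ≤ j + 1), if_pos (by omega : 1 ≤ i + 1)]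
    have e1 : j + 1 - 1 = j := rfl
    have e2 : i + 1 - 1 = i := rfl
    have e3 : n + 1 - (i + 1) = n - i := by omega
    rw [e1, e2, e3]
    rcases Nat.lt_or_ge i n with h | h
    · obtain ⟨m, hm⟩ : ∃ m, n - i = m + 1 := ⟨n - i - 1, by omega⟩
      have hm2 : n - (i + 1) = m := by omega
      rw [hm2, hm, Nat.choose_succ_succ n i, Nat.choose_succ_succ m j]
      ring
    · have h1 : n.choose (i + 1) = 0 := Nat.choose_eq_zero_of_lt (by omega)
      have h2 : n - i = 0 := by omega
      have h3 : n - (i + 1) = 0 := by omega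
      have hc : (0 : ℕ).choose (j + 1) = 0 := Nat.choose_eq_zero_of_lt (by omega)
      simp [h1, h2, h3, hc]

lemma hmul_sq (f g : ℕ → A) (n m : ℕ) (h : n ≤ m) :
    hmul lam f g n = ∑ i ∈ range (m + 1), ∑ j ∈ range (m + 1),
      (n.choose i * (n - i).choose j) • (lam ^ i • (f (n - j) * g (i + j))) := by
  unfold hmul hmulG
  have step1 : ∀ i ≤ n,
      (∑ j ∈ range (n - i + 1),
        (n.choose i * (n - i).choose j) • (lam ^ i • (f (n - j) * g (i + j))))
      = ∑ j ∈ range (m + 1),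
        (n.choose i * (n - i).choose j) • (lam ^ i • (f (n - j) * g (i + j))) := by
    intro i hi
    refine Finset.sum_subset (Finset.range_subset_range.2 (by omega)) fun j hj hj' => ?_
    rw [mem_range, Nat.lt_succ_iff] at hj
    rw [mem_range, Nat.lt_succ_iff, not_le] at hj'
    have : (n - i).choose j = 0 := Nat.choose_eq_zero_of_lt (by omega)
    simp [this]
  calc (∑ i ∈ range (n + 1), ∑ j ∈ range (n - i + 1),
        (n.choose i * (n - i).choose j) • (lam ^ i • (f (n - j) * g (i + j))))
      = ∑ i ∈ range (n + 1), ∑ j ∈ range (m + 1),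
        (n.choose i * (n - i).choose j) • (lam ^ i • (f (n - j) * g (i + j))) := by
        refine Finset.sum_congr rfl fun i hi => ?_
        rw [mem_range, Nat.lt_succ_iff] at hi
        exact step1 i hi
    _ = _ := by
        refine Finset.sum_subset (Finset.range_subset_range.2 (by omega)) fun i hi hi' => ?_
        rw [mem_range, Nat.lt_succ_iff, not_le] at hi'
        have : n.choose i = 0 := Nat.choose_eq_zero_of_lt (by omega)
        simp [this]

lemma hmul_shift (f g : ℕ → A) :
    hshift (hmul lam f g) =
      hmul lam (hshift f) g + hmul lam f (hshift g)
        + lam • hmul lam (hshift f) (hshift g) := by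
  funext n
  show hmul lam f g (n + 1)
    = hmul lam (hshift f) g n + hmul lam f (hshift g) n
        + lam • hmul lam (hshift f) (hshift g) n
  rw [hmul_sq lam f g (n + 1) (n + 1) le_rfl,
      hmul_sq lam (hshift f) g n (n + 1) n.le_succ,
      hmul_sq lam f (hshift g) n (n + 1) n.le_succ,
      hmul_sq lam (hshift f) (hshift g) n (n + 1) n.le_succ]
  simp only [hshift]
  have split : (∑ i ∈ range (n + 2), ∑ j ∈ range (n + 2),
      ((n + 1).choose i * ((n + 1 - i).choose j)) •
        (lam ^ i • (f (n + 1 - j) * g (i + j))))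
    = (∑ i ∈ range (n + 2), ∑ j ∈ range (n + 2),
        (n.choose i * ((n - i).choose j)) • (lam ^ i • (f (n + 1 - j) * g (i + j))))
      + (∑ i ∈ range (n + 2), ∑ j ∈ range (n + 2),
        (if 1 ≤ j then n.choose i * ((n - i).choose (j - 1)) else 0) •
          (lam ^ i • (f (n + 1 - j) * g (i + j))))
      + (∑ i ∈ range (n + 2), ∑ j ∈ range (n + 2),
        (if 1 ≤ i then n.choose (i - 1) * ((n + 1 - i).choose j) else 0) •
          (lam ^ i • (f (n + 1 - j) * g (i + j)))) := by
    rw [← Finset.sum_add_distrib, ← Finset.sum_add_distrib]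
    refine Finset.sum_congr rfl fun i _ => ?_
    rw [← Finset.sum_add_distrib, ← Finset.sum_add_distrib]
    refine Finset.sum_congr rfl fun j _ => ?_
    rw [← add_smul, ← add_smul, pascal2]
  rw [split]
  congr 1
  · congr 1
    -- first piece
    · refine Finset.sum_congr rfl fun i hi => Finset.sum_congr rfl fun j hj => ?_
      rw [mem_range] at hi hj
      rcases Nat.lt_or_ge j (n + 1) with hjn | hjn
      · have : n + 1 - j = n - j + 1 := by omega
        rw [this]
      · have hj1 : j = n + 1 := by omega
        rcases Nat.lt_or_ge i (n + 1) with hin | hin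
        · have : (n - i).choose j = 0 := Nat.choose_eq_zero_of_lt (by omega)
          simp [this]
        · have : n.choose i = 0 := Nat.choose_eq_zero_of_lt (by omega)
          simp [this]
    -- second piece
    · refine Finset.sum_congr rfl fun i hi => ?_
      rw [mem_range] at hi
      rw [sum_shift_head (fun j =>
        (if 1 ≤ j then n.choose i * ((n - i).choose (j - 1)) else 0) •
          (lam ^ i • (f (n + 1 - j) * g (i + j)))) (n + 1) (by simp)]
      have hv : (n.choose i * ((n - i).choose (n + 1))) •
          (lam ^ i • (f (n - (n + 1)) * g (i + (n + 1) + 1))) = 0 := by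
        rcases Nat.lt_or_ge i (n + 1) with hin | hin
        · have : (n - i).choose (n + 1) = 0 := Nat.choose_eq_zero_of_lt (by omega)
          simp [this]
        · have : n.choose i = 0 := Nat.choose_eq_zero_of_lt (by omega)
          simp [this]
      rw [sum_drop_last (fun j =>
        (n.choose i * ((n - i).choose j)) • (lam ^ i • (f (n - j) * g (i + j + 1))))
        (n + 1) hv]
      refine Finset.sum_congr rfl fun j hj => ?_
      rw [if_pos (by omega : 1 ≤ j + 1)]
      have e1 : j + 1 - 1 = j := rfl
      have e2 : n + 1 - (j + 1) = n - j := by omega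
      have e3 : i + (j + 1) = i + j + 1 := by omega
      rw [e1, e2, e3]
  -- third piece
  · rw [Finset.smul_sum]
    rw [sum_shift_head (fun i => ∑ j ∈ range (n + 2),
      (if 1 ≤ i then n.choose (i - 1) * ((n + 1 - i).choose j) else 0) •
        (lam ^ i • (f (n + 1 - j) * g (i + j)))) (n + 1) (by simp)]
    have hv0 : lam • (∑ j ∈ range (n + 2),
        (n.choose (n + 1) * ((n - (n + 1)).choose j)) •
          (lam ^ (n + 1) • (f (n - j + 1) * g (n + 1 + j + 1)))) = 0 := by
      simp [Nat.choose_succ_self]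
    rw [sum_drop_last (fun i => lam • ∑ j ∈ range (n + 2),
      (n.choose i * ((n - i).choose j)) • (lam ^ i • (f (n - j + 1) * g (i + j + 1))))
      (n + 1) hv0]
    refine Finset.sum_congr rfl fun i hi => ?_
    rw [mem_range] at hi
    rw [Finset.smul_sum]
    refine Finset.sum_congr rfl fun j hj => ?_
    rw [mem_range] at hj
    rw [if_pos (by omega : 1 ≤ i + 1)]
    have e2 : i + 1 - 1 = i := rfl
    have e3 : n + 1 - (i + 1) = n - i := by omega
    rw [e2, e3]
    rcases Nat.lt_or_ge j (n + 1) with hjn | hjn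
    · have e4 : n + 1 - j = n - j + 1 := by omega
      have e5 : i + 1 + j = i + j + 1 := by omega
      rw [e4, e5, smul_comm lam, smul_smul, ← pow_succ']
    · have hj1 : j = n + 1 := by omega
      have : (n - i).choose j = 0 := by
        subst hj1; exact Nat.choose_eq_zero_of_lt (by omega)
      simp [this]

end Aux

lemma hshift_hrbext {A : Type*} (P : A → A) (f : ℕ → A) : hshift (hrbext P f) = f := rfl

/-- If `P` is a Rota–Baxter operator of weight `λ` on `A`, then `P̃` is a
Rota–Baxter operator of weight `λ` on the `λ`-Hurwitz series algebra `A^ℕ`,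
with `ε_A ∘ P̃ = P ∘ ε_A` and `∂_A ∘ P̃ = id`. -/
theorem hrbext_rota_baxter {k A : Type*} [CommRing k] [CommRing A]
    [Algebra k A] (lam : k) (P : A →ₗ[k] A)
    (hP : ∀ x y : A, P x * P y = P (x * P y) + P (y * P x) + lam • P (x * y)) :
    (∀ f g : ℕ → A,
      hmul lam (hrbext P f) (hrbext P g) =
        hrbext P (hmul lam f (hrbext P g)) + hrbext P (hmul lam g (hrbext P f))
          + lam • hrbext P (hmul lam f g)) ∧
    (∀ f : ℕ → A, (hrbext P f) 0 = P (f 0)) ∧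
    (∀ f : ℕ → A, hshift (hrbext P f) = f) := by
  refine ⟨?_, fun f => rfl, fun f => rfl⟩
  intro f g
  refine seq_ext ?_ ?_
  · show hmul lam (hrbext P f) (hrbext P g) 0
      = hrbext P (hmul lam f (hrbext P g)) 0 + hrbext P (hmul lam g (hrbext P f)) 0
          + lam • hrbext P (hmul lam f g) 0
    show hmul lam (hrbext P f) (hrbext P g) 0
      = P (hmul lam f (hrbext P g) 0) + P (hmul lam g (hrbext P f) 0)
          + lam • P (hmul lam f g 0)
    simp only [hmul_zero]
    show P (f 0) * P (g 0) = P (f 0 * P (g 0)) + P (g 0 * P (f 0)) + lam • P (f 0 * g 0)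
    exact hP (f 0) (g 0)
  · rw [hmul_shift]
    have hs : hshift (hrbext P (hmul lam f (hrbext P g)) + hrbext P (hmul lam g (hrbext P f))
        + lam • hrbext P (hmul lam f g))
      = hmul lam f (hrbext P g) + hmul lam g (hrbext P f) + lam • hmul lam f g := rfl
    rw [hs, hshift_hrbext, hshift_hrbext, hmul_comm lam (hrbext P f) g]
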